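/- Let ξ_1, ξ_2, ... be independent centered Gaussian random variables each with variance 2/β, and for any positive integers k, ℓ of the same parity define D_k := ∑_{h=1}^{⌈(k+1)/2⌉} σ_{k,h} ξ_h and D_ℓ := ∑_{h=1}^{⌈(ℓ+1)/2⌉} σ_{ℓ,h} ξ_h with σ_{k,h} = k·|C_{k−1}^h| as above. Then Cov(D_k, D_ℓ) = (4/β)·(kℓ/(k+ℓ))·binom(k+ℓ−2, (k+ℓ−2)/2). -/

import Mathlib

open MeasureTheory ProbabilityTheory

/-- ±1-step paths with `n` steps (`n+1` vertices) on the positive integers,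
starting at 1 and ending at `e`. -/
def PMPath (n e : ℕ) : Type :=
  {i : Fin (n + 1) → ℕ //
    (∀ j, 1 ≤ i j) ∧
    (∀ j : Fin n, ((i j.castSucc : ℤ) - i j.succ).natAbs = 1) ∧
    i 0 = 1 ∧ i (Fin.last n) = e}

/-- `σ_{k,h} = k·|C_{k-1}^h|` where `C_{k-1}^h` is the set of ±1-paths of length `k-1`
on the positive integers from `1` to `2h-1` (`k` odd) resp. `2h` (`k` even). -/
noncomputable def sigma (k h : ℕ) : ℕ :=
  k * Nat.card (PMPath (k - 1) (if Odd k then 2 * h - 1 else 2 * h))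

/-- The covariance `E[(X - E X)(Y - E Y)]`. -/
noncomputable def cov {Ω : Type*} [MeasurableSpace Ω] (P : Measure Ω)
    (X Y : Ω → ℝ) : ℝ :=
  ∫ ω, (X ω - ∫ x, X x ∂P) * (Y ω - ∫ x, Y x ∂P) ∂P

section Aux

open Real Filter
open scoped NNReal ENNReal

namespace PMPath

lemma bound {n e : ℕ} (p : PMPath n e) : ∀ j : Fin (n+1), p.1 j ≤ (j : ℕ) + 1 := by
  obtain ⟨f, h1, hstep, h0, hl⟩ := p
  intro j
  obtain ⟨t, ht⟩ := j
  induction t with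
  | zero => simp only [Fin.mk_zero]; omega
  | succ s ih =>
    have hs : s < n + 1 := by omega
    have hs' : s < n := by omega
    have := hstep ⟨s, hs'⟩
    have hc : (⟨s, hs'⟩ : Fin n).castSucc = ⟨s, hs⟩ := rfl
    have hsu : (⟨s, hs'⟩ : Fin n).succ = ⟨s+1, ht⟩ := rfl
    rw [hc, hsu] at this
    have := ih hs
    simp only at *
    omega

instance finite (n e : ℕ) : Finite (PMPath n e) := by
  have : Function.Injective (fun p : PMPath n e => (fun j => (⟨p.1 j, by
      have := bound p j; have := j.2; omega⟩ : Fin (n+2)) : Fin (n+1) → Fin (n+2))) := by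
    intro p q h
    apply Subtype.ext
    funext j
    have := congrFun h j
    simpa [Fin.mk.injEq] using this
  exact Finite.of_injective _ this

end PMPath

noncomputable def Ncard (n e : ℕ) : ℕ := Nat.card (PMPath n e)

lemma Ncard_zero_right (n : ℕ) : Ncard n 0 = 0 := by
  have : IsEmpty (PMPath n 0) := by
    constructor; rintro ⟨f, h1, _, _, hl⟩
    have := h1 (Fin.last n); omega
  simp [Ncard, Nat.card_of_isEmpty]

lemma Ncard_base (e : ℕ) : Ncard 0 e = if e = 1 then 1 else 0 := by
  split_ifs with h
  · subst h
    have hne : Nonempty (PMPath 0 1) :=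
      ⟨⟨fun _ => 1, fun _ => le_refl 1, fun j => j.elim0, rfl, rfl⟩⟩
    have hsub : Subsingleton (PMPath 0 1) := by
      constructor
      intro p q
      apply Subtype.ext
      funext j
      have h0 : j = 0 := Fin.fin_one_eq_zero j
      rw [h0, p.2.2.2.1, q.2.2.2.1]
    simp [Ncard]
  · have : IsEmpty (PMPath 0 e) := by
      constructor; rintro ⟨f, h1, _, h0, hl⟩
      have : (0 : Fin 1) = Fin.last 0 := rfl
      rw [this] at h0
      exact h (h0 ▸ hl.symm ▸ rfl)
    simp [Ncard, Nat.card_of_isEmpty]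

namespace PMPath

/-- drop the last vertex -/
def initPath {n e x : ℕ} (p : PMPath (n+1) e) (hx : p.1 (Fin.castSucc (Fin.last n)) = x) :
    PMPath n x := by
  refine ⟨Fin.init p.1, fun j => p.2.1 _, fun j => ?_, ?_, ?_⟩
  · have h := p.2.2.1 j.castSucc
    simp only [Fin.init]
    rw [← Fin.succ_castSucc]
    exact h
  · have h0 := p.2.2.2.1
    simp only [Fin.init]
    rw [Fin.castSucc_zero, h0]
  · simp only [Fin.init]
    exact hx

def snocPath {n x : ℕ} (p : PMPath n x) (e : ℕ) (he : 1 ≤ e)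
    (hstep : ((x : ℤ) - e).natAbs = 1) : PMPath (n+1) e := by
  refine ⟨Fin.snoc p.1 e, ?_, ?_, ?_, ?_⟩
  · intro j
    rcases Fin.eq_castSucc_or_eq_last j with ⟨i, rfl⟩ | rfl
    · rw [Fin.snoc_castSucc]; exact p.2.1 i
    · rw [Fin.snoc_last]; exact he
  · intro j
    rcases Fin.eq_castSucc_or_eq_last j with ⟨i, rfl⟩ | rfl
    · rw [Fin.succ_castSucc, Fin.snoc_castSucc, Fin.snoc_castSucc]
      exact p.2.2.1 i
    · rw [Fin.succ_last, Fin.snoc_last, Fin.snoc_castSucc, p.2.2.2.2]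
      exact hstep
  · show Fin.snoc (α := fun _ => ℕ) p.1 e (Fin.castSucc 0) = 1
    rw [Fin.snoc_castSucc]
    exact p.2.2.2.1
  · rw [Fin.snoc_last]

lemma penult {n e : ℕ} (p : PMPath (n+1) (e+1)) :
    p.1 (Fin.castSucc (Fin.last n)) = e ∨ p.1 (Fin.castSucc (Fin.last n)) = e + 2 := by
  have h := p.2.2.1 (Fin.last n)
  rw [Fin.succ_last, p.2.2.2.2] at h
  omega

def snocEquiv (n e : ℕ) : PMPath (n+1) (e+1) ≃ PMPath n e ⊕ PMPath n (e+2) where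
  toFun p :=
    if h : p.1 (Fin.castSucc (Fin.last n)) = e then Sum.inl (initPath p h)
    else Sum.inr (initPath p (by rcases penult p with h' | h' <;> [exact absurd h' h; exact h']))
  invFun q :=
    match q with
    | Sum.inl p => snocPath p (e+1) (by omega) (by push_cast; omega)
    | Sum.inr p => snocPath p (e+1) (by omega) (by push_cast; omega)
  left_inv p := by
    have key : ∀ (x : ℕ) (hx : p.1 (Fin.castSucc (Fin.last n)) = x) he hs,
        snocPath (initPath p hx) (e+1) he hs = p := by
      intro x hx he hs
      apply Subtype.ext
      show Fin.snoc (Fin.init p.1) ((e+1 : ℕ)) = p.1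
      conv_rhs => rw [← Fin.snoc_init_self p.1]
      rw [p.2.2.2.2]
    by_cases h : p.1 (Fin.castSucc (Fin.last n)) = e
    · simp only [dif_pos h]
      exact key e h _ _
    · simp only [dif_neg h]
      exact key _ _ _ _
  right_inv q := by
    match q with
    | Sum.inl p =>
      simp only [snocPath]
      refine (dif_pos (show Fin.snoc (α := fun _ => ℕ) p.1 (e+1) (Fin.last n).castSucc = e by rw [Fin.snoc_castSucc]; exact p.2.2.2.2)).trans ?_
      congr 1
      apply Subtype.ext
      simp only [initPath]
      exact Fin.init_snoc _ _
    | Sum.inr p =>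
      simp only [snocPath]
      refine (dif_neg (show ¬ Fin.snoc (α := fun _ => ℕ) p.1 (e+1) (Fin.last n).castSucc = e by rw [Fin.snoc_castSucc, p.2.2.2.2]; omega)).trans ?_
      congr 1
      apply Subtype.ext
      simp only [initPath]
      exact Fin.init_snoc _ _

lemma Ncard_rec (n e : ℕ) : Ncard (n+1) (e+1) = Ncard n e + Ncard n (e+2) := by
  rw [Ncard, Nat.card_congr (snocEquiv n e), Nat.card_sum]
  rfl

lemma Ncard_closed (n : ℕ) : ∀ d : ℕ, (Ncard n (d+1) : ℤ) =
    if n % 2 = d % 2 ∧ d ≤ n then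
      ((n.choose ((n+d)/2) : ℤ) - (n.choose ((n+d)/2 + 1) : ℤ)) else 0 := by
  induction n with
  | zero =>
    intro d
    rw [Ncard_base]
    rcases Nat.eq_zero_or_pos d with rfl | hd
    · norm_num
    · rw [if_neg (by omega), if_neg (by omega)]
      norm_num
  | succ n ih =>
    intro d
    have hrec : (Ncard (n+1) (d+1) : ℤ) = Ncard n d + Ncard n (d+2) := by
      exact_mod_cast Ncard_rec n d
    match d with
    | 0 =>
      rw [hrec, Ncard_zero_right]
      by_cases hn : n % 2 = 1
      · obtain ⟨u, rfl⟩ : ∃ u, n = 2*u+1 := ⟨n/2, by omega⟩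
        have h2 : (Ncard (2*u+1) (0+2) : ℤ)
            = ((2*u+1).choose (u+1) : ℤ) - ((2*u+1).choose (u+1+1) : ℤ) := by
          have h := ih 1
          rw [if_pos (by omega)] at h
          have hi : (2*u+1+1)/2 = u+1 := by omega
          rw [hi] at h
          norm_num at h ⊢
          exact h
        rw [h2, if_pos (by omega)]
        have hi2 : (2*u+1+1+0)/2 = u+1 := by omega
        rw [hi2]
        have h1 : ((2*u+1+1).choose (u+1) : ℤ)
            = (2*u+1).choose u + (2*u+1).choose (u+1) := by
          exact_mod_cast Nat.choose_succ_succ (2*u+1) u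
        have h2' : ((2*u+1+1).choose (u+1+1) : ℤ)
            = (2*u+1).choose (u+1) + (2*u+1).choose (u+1+1) := by
          exact_mod_cast Nat.choose_succ_succ (2*u+1) (u+1)
        have h3 : ((2*u+1).choose (u+1) : ℤ) = (2*u+1).choose u := by
          exact_mod_cast Nat.choose_symm_half u
        push_cast
        linarith [h1, h2', h3]
      · have h2 : (Ncard n (0+2) : ℤ) = 0 := by
          have h := ih 1
          rw [if_neg (by omega)] at h
          norm_num at h ⊢
          exact h
        rw [h2, if_neg (by omega)]
        norm_num
    | (d'+1) =>
      rw [hrec]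
      have e1 : (Ncard n (d'+1) : ℤ) = _ := ih d'
      have e2 : (Ncard n (d'+1+2) : ℤ) =
          if n % 2 = (d'+2) % 2 ∧ d'+2 ≤ n then
            ((n.choose ((n+(d'+2))/2) : ℤ) - (n.choose ((n+(d'+2))/2 + 1) : ℤ)) else 0 := by
        have h : Ncard n (d'+1+2) = Ncard n (d'+2+1) := by norm_num
        rw [h]; exact ih (d'+2)
      rw [e1, e2]
      by_cases hpar : n % 2 = d' % 2
      · by_cases hle2 : d' + 2 ≤ n
        · obtain ⟨t, rfl⟩ : ∃ t, n = d' + 2*t + 2 := ⟨(n-d'-2)/2, by omega⟩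
          have hi0 : (d'+2*t+2+d')/2 = d'+t+1 := by omega
          have hi1 : (d'+2*t+2+(d'+2))/2 = d'+t+2 := by omega
          have hi2 : (d'+2*t+2+1+(d'+1))/2 = d'+t+2 := by omega
          rw [if_pos (by omega), if_pos (by omega), if_pos (by omega), hi0, hi1, hi2]
          have h1 : ((d'+2*t+2+1).choose (d'+t+2) : ℤ)
              = (d'+2*t+2).choose (d'+t+1) + (d'+2*t+2).choose (d'+t+2) := by
            exact_mod_cast Nat.choose_succ_succ (d'+2*t+2) (d'+t+1)
          have h2 : ((d'+2*t+2+1).choose (d'+t+2+1) : ℤ)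
              = (d'+2*t+2).choose (d'+t+2) + (d'+2*t+2).choose (d'+t+2+1) := by
            exact_mod_cast Nat.choose_succ_succ (d'+2*t+2) (d'+t+2)
          have hj1 : (d'+t+1) + 1 = d'+t+2 := by omega
          have hj2 : (d'+t+2) + 1 = d'+t+2+1 := by omega
          rw [hj1, hj2]
          linarith [h1, h2]
        · by_cases hle1 : d' ≤ n
          · have hnd : n = d' := by omega
            subst hnd
            have hi0 : (n+n)/2 = n := by omega
            have hi2 : (n+1+(n+1))/2 = n+1 := by omega
            rw [if_pos (by omega), if_neg (by omega), if_pos (by omega), hi0, hi2]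
            have h1 : (n+1).choose (n+1) = 1 := Nat.choose_self _
            have h2 : (n+1).choose (n+1+1) = 0 := Nat.choose_eq_zero_of_lt (by omega)
            have h3 : n.choose n = 1 := Nat.choose_self _
            have h4 : n.choose (n+1) = 0 := Nat.choose_eq_zero_of_lt (by omega)
            rw [h1, h2, h3, h4]
            norm_num
          · rw [if_neg (by omega), if_neg (by omega), if_neg (by omega)]
            ring
      · rw [if_neg (by omega), if_neg (by omega), if_neg (by omega)]
        ring

lemma Ncard_big {n e : ℕ} (h : n + 1 < e) : Ncard n e = 0 := by
  match e, h with
  | (d+1), h =>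
    have hc := Ncard_closed n d
    rw [if_neg (by omega)] at hc
    exact_mod_cast hc

lemma Ncard_parity {n d : ℕ} (h : ¬ n % 2 = d % 2) : Ncard n (d+1) = 0 := by
  have hc := Ncard_closed n d
  rw [if_neg (by tauto)] at hc
  exact_mod_cast hc

lemma Ncard_center (m : ℕ) : (m+1) * Ncard (2*m) 1 = (2*m).choose m := by
  have h := Ncard_closed (2*m) 0
  rw [if_pos ⟨by omega, by omega⟩] at h
  have hi : (2*m+0)/2 = m := by omega
  rw [hi] at h
  have h2 : ((2*m).choose (m+1) : ℤ) * (m+1) = (2*m).choose m * m := by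
    have := Nat.choose_succ_right_eq (2*m) m
    have h3 : 2*m - m = m := by omega
    rw [h3] at this
    exact_mod_cast this
  have hN : (Ncard (2*m) 1 : ℤ) = (2*m).choose m - (2*m).choose (m+1) := by
    exact_mod_cast h
  have : ((m:ℤ)+1) * Ncard (2*m) 1 = (2*m).choose m := by
    rw [hN]; linear_combination (-1 : ℤ) * h2
  exact_mod_cast this

/-- tail cutoff for the convolution sums -/
lemma Ncard_sum_ext (n₁ n₂ R R' : ℕ) (h1 : n₁ + 2 ≤ R) (hRR : R ≤ R') :
    ∑ e ∈ Finset.range R', Ncard n₁ (e+1) * Ncard n₂ (e+1)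
      = ∑ e ∈ Finset.range R, Ncard n₁ (e+1) * Ncard n₂ (e+1) := by
  symm
  apply Finset.sum_subset (Finset.range_subset_range.mpr hRR)
  intro e _ he
  simp only [Finset.mem_range, not_lt] at he
  rw [Ncard_big (n := n₁) (by omega), zero_mul]

lemma Ncard_conv (n₂ : ℕ) : ∀ n₁ : ℕ,
    ∑ e ∈ Finset.range (n₁ + n₂ + 2), Ncard n₁ (e+1) * Ncard n₂ (e+1)
      = Ncard (n₁ + n₂) 1 := by
  induction n₂ with
  | zero =>
    intro n₁
    have : ∀ e : ℕ, Ncard n₁ (e+1) * Ncard 0 (e+1)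
        = if e = 0 then Ncard n₁ 1 else 0 := by
      intro e
      rw [Ncard_base]
      rcases Nat.eq_zero_or_pos e with rfl | he
      · simp
      · rw [if_neg (by omega), if_neg (by omega), mul_zero]
    simp only [this]
    rw [Finset.sum_ite_eq' (Finset.range (n₁ + 0 + 2)) 0 (fun _ => Ncard n₁ 1)]
    rw [if_pos (by simp)]
    norm_num
  | succ n₂ ih =>
    intro n₁
    have key : ∀ e : ℕ, Ncard (n₂+1) (e+1) = Ncard n₂ e + Ncard n₂ (e+2) := by
      intro e
      match e with
      | 0 => rw [Ncard_rec]
      | (e+1) => rw [Ncard_rec]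
    calc ∑ e ∈ Finset.range (n₁ + (n₂+1) + 2), Ncard n₁ (e+1) * Ncard (n₂+1) (e+1)
        = ∑ e ∈ Finset.range (n₁ + n₂ + 3), (Ncard n₁ (e+1) * Ncard n₂ e
            + Ncard n₁ (e+1) * Ncard n₂ (e+2)) := by
          apply Finset.sum_congr (by congr 1)
          intro e _
          rw [key e, mul_add]
      _ = ∑ e ∈ Finset.range (n₁ + n₂ + 3), Ncard n₁ (e+1) * Ncard n₂ e
            + ∑ e ∈ Finset.range (n₁ + n₂ + 3), Ncard n₁ (e+1) * Ncard n₂ (e+2) := by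
          rw [Finset.sum_add_distrib]
      _ = ∑ e ∈ Finset.range (n₁ + n₂ + 2), Ncard n₁ (e+2) * Ncard n₂ (e+1)
            + ∑ e ∈ Finset.range (n₁ + n₂ + 4), Ncard n₁ e * Ncard n₂ (e+1) := by
          congr 1
          · rw [Finset.sum_range_succ' (fun e => Ncard n₁ (e+1) * Ncard n₂ e) (n₁+n₂+2)]
            norm_num [Ncard_zero_right]
          · rw [Finset.sum_range_succ' (fun e => Ncard n₁ e * Ncard n₂ (e+1)) (n₁+n₂+3)]
            norm_num [Ncard_zero_right]
      _ = ∑ e ∈ Finset.range (n₁ + n₂ + 4), Ncard (n₁+1) (e+1) * Ncard n₂ (e+1) := by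
          have hext : ∑ e ∈ Finset.range (n₁ + n₂ + 2), Ncard n₁ (e+2) * Ncard n₂ (e+1)
              = ∑ e ∈ Finset.range (n₁ + n₂ + 4), Ncard n₁ (e+2) * Ncard n₂ (e+1) := by
            apply Finset.sum_subset (Finset.range_subset_range.mpr (by omega))
            intro e _ he
            simp only [Finset.mem_range, not_lt] at he
            rw [Ncard_big (by omega), zero_mul]
          rw [hext, ← Finset.sum_add_distrib]
          apply Finset.sum_congr rfl
          intro e _
          have hkey : Ncard (n₁+1) (e+1) = Ncard n₁ e + Ncard n₁ (e+2) := by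
            match e with
            | 0 => rw [Ncard_rec]
            | (e+1) => rw [Ncard_rec]
          rw [hkey, add_mul, add_comm]
      _ = Ncard (n₁ + (n₂+1)) 1 := by
          rw [Ncard_sum_ext (n₁+1) n₂ (n₁+1+n₂+2) (n₁+n₂+4) (by omega) (by omega),
            ih (n₁+1)]
          congr 1
          omega


lemma path_sum_conv (k ℓ c : ℕ) (hk : 0 < k) (hℓ : 0 < ℓ) (hc : c ≤ 1)
    (hck : k % 2 = (c+1) % 2) (hcl : ℓ % 2 = (c+1) % 2) :
    ∑ h ∈ Finset.Icc 1 (min ((k+2)/2) ((ℓ+2)/2)),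
        Ncard (k-1) (2*h-1+c) * Ncard (ℓ-1) (2*h-1+c)
      = Ncard (k + ℓ - 2) 1 := by
  have hconv := Ncard_conv (ℓ-1) (k-1)
  have hidx : k - 1 + (ℓ - 1) + 2 = k + ℓ := by omega
  have hidx2 : k - 1 + (ℓ - 1) = k + ℓ - 2 := by omega
  rw [hidx, hidx2] at hconv
  have hinj : ∀ x ∈ Finset.Icc 1 (min ((k+2)/2) ((ℓ+2)/2)),
      ∀ y ∈ Finset.Icc 1 (min ((k+2)/2) ((ℓ+2)/2)),
      2*x-2+c = 2*y-2+c → x = y := by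
    intro x hx y hy hxy
    have hx' := Finset.mem_Icc.mp hx
    have hy' := Finset.mem_Icc.mp hy
    omega
  calc ∑ h ∈ Finset.Icc 1 (min ((k+2)/2) ((ℓ+2)/2)),
        Ncard (k-1) (2*h-1+c) * Ncard (ℓ-1) (2*h-1+c)
      = ∑ h ∈ Finset.Icc 1 (min ((k+2)/2) ((ℓ+2)/2)),
          (fun e => Ncard (k-1) (e+1) * Ncard (ℓ-1) (e+1)) (2*h-2+c) := by
        apply Finset.sum_congr rfl
        intro h hh
        have hh' := Finset.mem_Icc.mp hh
        have he : 2*h-1+c = (2*h-2+c) + 1 := by omega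
        simp only [he]
    _ = ∑ e ∈ (Finset.Icc 1 (min ((k+2)/2) ((ℓ+2)/2))).image (fun h => 2*h-2+c),
          (fun e => Ncard (k-1) (e+1) * Ncard (ℓ-1) (e+1)) e :=
        (Finset.sum_image (g := fun h => 2*h-2+c)
          (f := fun e => Ncard (k-1) (e+1) * Ncard (ℓ-1) (e+1)) hinj).symm
    _ = ∑ e ∈ Finset.range (k+ℓ),
          (fun e => Ncard (k-1) (e+1) * Ncard (ℓ-1) (e+1)) e := by
        apply Finset.sum_subset
        · intro e he
          simp only [Finset.mem_image, Finset.mem_Icc] at he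
          obtain ⟨h, ⟨h1, h2⟩, rfl⟩ := he
          simp only [Finset.mem_range]
          omega
        · intro e _ hne
          simp only [Finset.mem_image, Finset.mem_Icc, not_exists, not_and] at hne
          show Ncard (k-1) (e+1) * Ncard (ℓ-1) (e+1) = 0
          by_cases hp : (k-1) % 2 = e % 2
          · by_cases hek : e + 1 ≤ k
            · by_cases hel : e + 1 ≤ ℓ
              · exact (hne ((e+2-c)/2) ⟨by omega, by omega⟩ (by omega)).elim
              · rw [Ncard_big (n := ℓ-1) (by omega), mul_zero]
            · rw [Ncard_big (n := k-1) (by omega), zero_mul]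
          · rw [Ncard_parity hp, zero_mul]
    _ = Ncard (k + ℓ - 2) 1 := hconv

lemma sigma_sum (k ℓ : ℕ) (hk : 0 < k) (hℓ : 0 < ℓ) (hpar : k % 2 = ℓ % 2) :
    ∑ h ∈ Finset.Icc 1 (min ((k+2)/2) ((ℓ+2)/2)), sigma k h * sigma ℓ h
      = k * ℓ * Ncard (k + ℓ - 2) 1 := by
  by_cases hodd : Odd k
  · have hoddl : Odd ℓ := by rw [Nat.odd_iff] at *; omega
    have hck : k % 2 = (0+1) % 2 := by rw [Nat.odd_iff] at hodd; omega
    have hcl : ℓ % 2 = (0+1) % 2 := by rw [Nat.odd_iff] at hoddl; omega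
    have hconv := path_sum_conv k ℓ 0 hk hℓ (by omega) hck hcl
    simp only [Nat.add_zero] at hconv
    rw [← hconv, Finset.mul_sum]
    apply Finset.sum_congr rfl
    intro h _
    simp only [sigma, if_pos hodd, if_pos hoddl]
    show k * Ncard (k-1) (2*h-1) * (ℓ * Ncard (ℓ-1) (2*h-1)) = _
    ring
  · have hoddl : ¬ Odd ℓ := by rw [Nat.odd_iff] at *; omega
    have hck : k % 2 = (1+1) % 2 := by rw [Nat.odd_iff] at hodd; omega
    have hcl : ℓ % 2 = (1+1) % 2 := by rw [Nat.odd_iff] at hoddl; omega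
    have hconv := path_sum_conv k ℓ 1 hk hℓ (by omega) hck hcl
    rw [← hconv, Finset.mul_sum]
    apply Finset.sum_congr rfl
    intro h hh
    have hh' := Finset.mem_Icc.mp hh
    simp only [sigma, if_neg hodd, if_neg hoddl]
    have h2 : 2*h-1+1 = 2*h := by omega
    show k * Ncard (k-1) (2*h) * (ℓ * Ncard (ℓ-1) (2*h))
      = k * ℓ * (Ncard (k-1) (2*h-1+1) * Ncard (ℓ-1) (2*h-1+1))
    rw [h2]
    ring



lemma tendsto_mul_exp_neg_sq_atTop {b : ℝ} (hb : 0 < b) :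
    Tendsto (fun x : ℝ => x * rexp (-b * x ^ 2)) atTop (nhds 0) := by
  have h := rpow_mul_exp_neg_mul_sq_isLittleO_exp_neg hb 1
  have h0 : Tendsto (fun x : ℝ => rexp (-(1/2) * x)) atTop (nhds 0) :=
    Real.tendsto_exp_comp_nhds_zero.mpr
      (Filter.Tendsto.const_mul_atTop_of_neg (by norm_num) tendsto_id)
  have := h.trans_tendsto h0
  simpa [Real.rpow_one] using this

lemma tendsto_mul_exp_neg_sq_atBot {b : ℝ} (hb : 0 < b) :
    Tendsto (fun x : ℝ => x * rexp (-b * x ^ 2)) atBot (nhds 0) := by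
  have h := (tendsto_mul_exp_neg_sq_atTop hb).comp tendsto_neg_atBot_atTop
  have h2 : Tendsto (fun x : ℝ => -(x * rexp (-b * x ^ 2))) atBot (nhds 0) := by
    refine h.congr fun x => ?_
    show -x * rexp (-b * (-x) ^ 2) = -(x * rexp (-b * x ^ 2))
    rw [neg_sq]; ring
  simpa using h2.neg

lemma integrable_sq_mul_exp {b : ℝ} (hb : 0 < b) :
    Integrable (fun x : ℝ => x * (x * rexp (-b * x ^ 2))) := by
  have h := integrable_rpow_mul_exp_neg_mul_sq hb (s := 2) (by norm_num)
  have heq : (fun x : ℝ => x ^ (2:ℝ) * rexp (-b * x ^ 2))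
      = fun x : ℝ => x * (x * rexp (-b * x ^ 2)) := by
    funext x
    rw [show (2:ℝ) = ((2:ℕ):ℝ) by norm_num, Real.rpow_natCast]
    ring
  rwa [heq] at h

lemma integral_sq_mul_exp {b : ℝ} (hb : 0 < b) :
    ∫ x : ℝ, x ^ 2 * rexp (-b * x ^ 2) = (2*b)⁻¹ * Real.sqrt (π / b) := by
  have hb' : (2*b) ≠ 0 := by positivity
  have hu : ∀ x : ℝ, HasDerivAt (fun y : ℝ => y) 1 x := fun x => hasDerivAt_id x
  have hv : ∀ x : ℝ, HasDerivAt (fun y : ℝ => -(2*b)⁻¹ * rexp (-b * y ^ 2))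
      (x * rexp (-b * x ^ 2)) x := by
    intro x
    have h1 : HasDerivAt (fun y : ℝ => -b * y ^ 2) (-b * (2*x)) x := by
      simpa using ((hasDerivAt_pow 2 x).const_mul (-b))
    have h2 := (h1.exp).const_mul (-(2*b)⁻¹)
    refine h2.congr_deriv ?_
    field_simp
  have hint1 : Integrable ((fun y : ℝ => y) * fun x => x * rexp (-b * x ^ 2)) := by
    have := integrable_sq_mul_exp hb
    exact this.congr (by filter_upwards with x; rfl)
  have hint2 : Integrable ((fun _ : ℝ => (1:ℝ)) * fun y => -(2*b)⁻¹ * rexp (-b * y ^ 2)) := by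
    have := (integrable_exp_neg_mul_sq hb).const_mul (-(2*b)⁻¹)
    exact this.congr (by filter_upwards with x; exact (one_mul _).symm)
  have hbot : Tendsto ((fun y : ℝ => y) * fun y => -(2*b)⁻¹ * rexp (-b * y ^ 2))
      atBot (nhds 0) := by
    have := (tendsto_mul_exp_neg_sq_atBot hb).const_mul (-(2*b)⁻¹)
    rw [mul_zero] at this
    refine this.congr (fun x => ?_)
    simp [Pi.mul_apply]; ring
  have htop : Tendsto ((fun y : ℝ => y) * fun y => -(2*b)⁻¹ * rexp (-b * y ^ 2))
      atTop (nhds 0) := by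
    have := (tendsto_mul_exp_neg_sq_atTop hb).const_mul (-(2*b)⁻¹)
    rw [mul_zero] at this
    refine this.congr (fun x => ?_)
    simp [Pi.mul_apply]; ring
  have key := integral_mul_deriv_eq_deriv_mul (fun x _ => hu x) (fun x _ => hv x) hint1 hint2 hbot htop
  have lhs_eq : ∫ x : ℝ, x * (x * rexp (-b * x ^ 2)) = ∫ x : ℝ, x ^ 2 * rexp (-b * x ^ 2) := by
    congr 1; funext x; ring
  rw [lhs_eq] at key
  rw [key]
  have : ∫ x : ℝ, (1:ℝ) * (-(2*b)⁻¹ * rexp (-b * x ^ 2)) = -(2*b)⁻¹ * ∫ x : ℝ, rexp (-b * x ^ 2) := by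
    rw [← integral_const_mul]
    congr 1; funext x; ring
  rw [this, integral_gaussian]
  ring

section Moments
variable {v : ℝ≥0}

lemma gaussianReal_eq_withDensity (μ : ℝ) (hv : v ≠ 0) :
    gaussianReal μ v = volume.withDensity
      (fun x => ((Real.toNNReal (gaussianPDFReal μ v x) : ℝ≥0) : ℝ≥0∞)) := by
  rw [gaussianReal, if_neg hv]
  rfl

lemma integral_gaussianReal (μ : ℝ) (hv : v ≠ 0) (g : ℝ → ℝ) :
    ∫ x, g x ∂(gaussianReal μ v)
      = ∫ x, gaussianPDFReal μ v x * g x := by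
  rw [gaussianReal_eq_withDensity μ hv,
    integral_withDensity_eq_integral_smul (measurable_gaussianPDFReal μ v).real_toNNReal g]
  congr 1
  funext x
  rw [NNReal.smul_def, Real.coe_toNNReal _ (gaussianPDFReal_nonneg μ v x)]
  rfl

lemma integrable_gaussianReal (hv : v ≠ 0) {g : ℝ → ℝ}
    (hg : Integrable (fun x => gaussianPDFReal 0 v x * g x)) :
    Integrable g (gaussianReal 0 v) := by
  rw [gaussianReal_eq_withDensity 0 hv,
    integrable_withDensity_iff_integrable_smul (measurable_gaussianPDFReal 0 v).real_toNNReal]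
  refine hg.congr (by
    filter_upwards with x
    rw [NNReal.smul_def, Real.coe_toNNReal _ (gaussianPDFReal_nonneg 0 v x), smul_eq_mul])

lemma pdf_decomp (x : ℝ) (hv : v ≠ 0) :
    gaussianPDFReal 0 v x = (Real.sqrt (2 * π * v))⁻¹ * rexp (-(2*(v:ℝ))⁻¹ * x ^ 2) := by
  rw [gaussianPDFReal]
  congr 1
  rw [sub_zero]
  congr 1
  have hv0 : (0:ℝ) < v := lt_of_le_of_ne v.2 (by exact_mod_cast hv.symm)
  field_simp

lemma integrable_id_gaussianReal (hv : v ≠ 0) : Integrable (fun x => x) (gaussianReal 0 v) := by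
  have hv0 : (0:ℝ) < v := lt_of_le_of_ne v.2 (by exact_mod_cast hv.symm)
  have hb : (0:ℝ) < (2*(v:ℝ))⁻¹ := by positivity
  apply integrable_gaussianReal hv
  have h := (integrable_mul_exp_neg_mul_sq hb).const_mul (Real.sqrt (2 * π * v))⁻¹
  refine h.congr (by
    filter_upwards with x
    rw [pdf_decomp x hv]
    ring)

lemma integrable_sq_gaussianReal (hv : v ≠ 0) :
    Integrable (fun x => x * x) (gaussianReal 0 v) := by
  have hv0 : (0:ℝ) < v := lt_of_le_of_ne v.2 (by exact_mod_cast hv.symm)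
  have hb : (0:ℝ) < (2*(v:ℝ))⁻¹ := by positivity
  apply integrable_gaussianReal hv
  have h := (integrable_sq_mul_exp hb).const_mul (Real.sqrt (2 * π * v))⁻¹
  refine h.congr (by
    filter_upwards with x
    rw [pdf_decomp x hv]
    ring)

lemma integral_id_gaussianReal (hv : v ≠ 0) : ∫ x, x ∂(gaussianReal 0 v) = 0 := by
  rw [integral_gaussianReal 0 hv]
  have hodd : ∀ x : ℝ, gaussianPDFReal 0 v (-x) * (-x) = -(gaussianPDFReal 0 v x * x) := by
    intro x
    rw [gaussianPDFReal, gaussianPDFReal]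
    simp [neg_sq]
  have h1 : ∫ x : ℝ, gaussianPDFReal 0 v x * x
      = ∫ x : ℝ, gaussianPDFReal 0 v (-x) * (-x) := by
    rw [integral_neg_eq_self (fun x : ℝ => gaussianPDFReal 0 v x * x) volume]
  have h2 : ∫ x : ℝ, gaussianPDFReal 0 v (-x) * (-x)
      = - ∫ x : ℝ, gaussianPDFReal 0 v x * x := by
    rw [show (fun x : ℝ => gaussianPDFReal 0 v (-x) * (-x))
        = fun x : ℝ => -(gaussianPDFReal 0 v x * x) from funext hodd]
    exact integral_neg _
  linarith [h1, h2]

lemma integral_sq_gaussianReal (hv : v ≠ 0) :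
    ∫ x, x * x ∂(gaussianReal 0 v) = v := by
  have hv0 : (0:ℝ) < v := lt_of_le_of_ne v.2 (by exact_mod_cast hv.symm)
  have hb : (0:ℝ) < (2*(v:ℝ))⁻¹ := by positivity
  rw [integral_gaussianReal 0 hv]
  have h1 : ∫ x : ℝ, gaussianPDFReal 0 v x * (x * x)
      = (Real.sqrt (2 * π * v))⁻¹ * ∫ x : ℝ, x ^ 2 * rexp (-(2*(v:ℝ))⁻¹ * x ^ 2) := by
    rw [← integral_const_mul]
    congr 1
    funext x
    rw [pdf_decomp x hv]
    ring
  rw [h1, integral_sq_mul_exp hb]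
  have hπ : (0:ℝ) < 2 * π * v := by positivity
  have h2 : π / (2*(v:ℝ))⁻¹ = 2 * π * v := by field_simp
  rw [h2]
  have h3 : ((2*(v:ℝ))⁻¹)⁻¹ = 2 * v := by field_simp
  have h4 : (2 * ((2*(v:ℝ))⁻¹))⁻¹ = v := by field_simp
  rw [h4]
  have h5 : Real.sqrt (2 * π * v) ≠ 0 := by positivity
  field_simp
end Moments

section CovLemma

variable {Ω : Type*} [MeasurableSpace Ω] (P : Measure Ω) [IsProbabilityMeasure P]

lemma cov_linear_combo (vR : ℝ) (hvR : 0 ≤ vR)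
    (ξ : ℕ → Ω → ℝ) (hmeas : ∀ h, Measurable (ξ h))
    (hindep : iIndepFun ξ P)
    (hlaw : ∀ h, Measure.map (ξ h) P = gaussianReal 0 (Real.toNNReal vR))
    (hv : Real.toNNReal vR ≠ 0)
    (a b : ℕ → ℝ) (s t : Finset ℕ) :
    cov P (fun ω => ∑ h ∈ s, a h * ξ h ω) (fun ω => ∑ h ∈ t, b h * ξ h ω)
      = vR * ∑ h ∈ s ∩ t, a h * b h := by
  set v : ℝ≥0 := Real.toNNReal vR with hvdef
  have hvR' : ((v : ℝ≥0) : ℝ) = vR := Real.coe_toNNReal _ hvR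
  -- basic facts about each ξ h
  have hint : ∀ h, Integrable (ξ h) P := by
    intro h
    have h1 := integrable_id_gaussianReal (v := v) hv
    rw [← hlaw h] at h1
    exact (integrable_map_measure aestronglyMeasurable_id (hmeas h).aemeasurable).mp h1
  have hE : ∀ h, ∫ ω, ξ h ω ∂P = 0 := by
    intro h
    have h2 : ∫ y, (fun x : ℝ => x) y ∂(Measure.map (ξ h) P)
        = ∫ ω, (fun x : ℝ => x) (ξ h ω) ∂P :=
      integral_map (hmeas h).aemeasurable measurable_id.aestronglyMeasurable
    rw [hlaw h, integral_id_gaussianReal hv] at h2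
    exact h2.symm
  have hintsq : ∀ h, Integrable (fun ω => ξ h ω * ξ h ω) P := by
    intro h
    have h1 := integrable_sq_gaussianReal (v := v) hv
    rw [← hlaw h] at h1
    exact (integrable_map_measure h1.aestronglyMeasurable (hmeas h).aemeasurable).mp h1
  have hEsq : ∀ h, ∫ ω, ξ h ω * ξ h ω ∂P = vR := by
    intro h
    have h2 : ∫ y, (fun x : ℝ => x * x) y ∂(Measure.map (ξ h) P)
        = ∫ ω, (fun x : ℝ => x * x) (ξ h ω) ∂P :=
      integral_map (hmeas h).aemeasurable (measurable_id.mul measurable_id).aestronglyMeasurable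
    rw [hlaw h, integral_sq_gaussianReal hv] at h2
    rw [← hvR']
    exact h2.symm
  have hprod : ∀ h h', Integrable (fun ω => ξ h ω * ξ h' ω) P := by
    intro h h'
    by_cases hhh : h = h'
    · subst hhh; exact hintsq h
    · exact (hindep.indepFun hhh).integrable_mul (hint h) (hint h')
  have hval : ∀ h h', ∫ ω, ξ h ω * ξ h' ω ∂P = if h' = h then vR else 0 := by
    intro h h'
    by_cases hhh : h' = h
    · subst hhh; rw [if_pos rfl]; exact hEsq h'
    · rw [if_neg hhh]
      have hI : IndepFun (ξ h) (ξ h') P := hindep.indepFun (fun hc => hhh hc.symm)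
      have := hI.integral_mul_eq_mul_integral (hint h).aestronglyMeasurable (hint h').aestronglyMeasurable
      rw [hE h, hE h', mul_zero] at this
      exact this
  -- expectations vanish
  have hEX : ∫ ω, (∑ h ∈ s, a h * ξ h ω) ∂P = 0 := by
    rw [integral_finset_sum s (fun h _ => (hint h).const_mul (a h))]
    apply Finset.sum_eq_zero
    intro h _
    rw [integral_const_mul, hE h, mul_zero]
  have hEY : ∫ ω, (∑ h ∈ t, b h * ξ h ω) ∂P = 0 := by
    rw [integral_finset_sum t (fun h _ => (hint h).const_mul (b h))]
    apply Finset.sum_eq_zero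
    intro h _
    rw [integral_const_mul, hE h, mul_zero]
  rw [cov, hEX, hEY]
  simp only [sub_zero]
  have hsplit : ∀ ω, (∑ h ∈ s, a h * ξ h ω) * (∑ h' ∈ t, b h' * ξ h' ω)
      = ∑ h ∈ s, ∑ h' ∈ t, (a h * b h') * (ξ h ω * ξ h' ω) := by
    intro ω
    rw [Finset.sum_mul_sum]
    apply Finset.sum_congr rfl
    intro h _
    apply Finset.sum_congr rfl
    intro h' _
    ring
  rw [show (fun ω => (∑ h ∈ s, a h * ξ h ω) * (∑ h' ∈ t, b h' * ξ h' ω))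
      = fun ω => ∑ h ∈ s, ∑ h' ∈ t, (a h * b h') * (ξ h ω * ξ h' ω) from funext hsplit]
  rw [integral_finset_sum s (fun h _ =>
    integrable_finset_sum t (fun h' _ => (hprod h h').const_mul (a h * b h')))]
  have hinner : ∀ h ∈ s, ∫ ω, (∑ h' ∈ t, (a h * b h') * (ξ h ω * ξ h' ω)) ∂P
      = if h ∈ t then a h * b h * vR else 0 := by
    intro h _
    rw [integral_finset_sum t (fun h' _ => (hprod h h').const_mul (a h * b h'))]
    have : ∀ h' ∈ t, ∫ ω, (a h * b h') * (ξ h ω * ξ h' ω) ∂P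
        = if h' = h then a h * b h' * vR else 0 := by
      intro h' _
      rw [integral_const_mul, hval h h']
      by_cases hhh : h' = h
      · rw [if_pos hhh, if_pos hhh]
      · rw [if_neg hhh, if_neg hhh, mul_zero]
    rw [Finset.sum_congr rfl this, Finset.sum_ite_eq' t h (fun h' => a h * b h' * vR)]
  rw [Finset.sum_congr rfl hinner, Finset.sum_ite_mem s t (fun h => a h * b h * vR),
    Finset.mul_sum]
  apply Finset.sum_congr rfl
  intro h _
  ring

end CovLemma

end PMPath

end Aux

open PMPath

/-- Let `ξ₁, ξ₂, …` be independent centered Gaussians of variance `2/β`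
and, for positive integers `k, ℓ` of the same parity, set
`D_k = ∑_{h=1}^{⌈(k+1)/2⌉} σ_{k,h} ξ_h`. Then
`Cov(D_k, D_ℓ) = (4/β)·(kℓ/(k+ℓ))·C(k+ℓ-2, (k+ℓ-2)/2)`. -/
theorem gaussian_cov_trace_diff (β : ℝ) (hβ : 0 < β) (k ℓ : ℕ)
    (hk : 0 < k) (hℓ : 0 < ℓ) (hpar : k % 2 = ℓ % 2)
    {Ω : Type*} [MeasurableSpace Ω] (P : Measure Ω) [IsProbabilityMeasure P]
    (ξ : ℕ → Ω → ℝ) (hmeas : ∀ h, Measurable (ξ h))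
    (hindep : iIndepFun ξ P)
    (hlaw : ∀ h, Measure.map (ξ h) P = gaussianReal 0 (Real.toNNReal (2 / β))) :
    cov P (fun ω => ∑ h ∈ Finset.Icc 1 ((k + 2) / 2), (sigma k h : ℝ) * ξ h ω)
        (fun ω => ∑ h ∈ Finset.Icc 1 ((ℓ + 2) / 2), (sigma ℓ h : ℝ) * ξ h ω) =
      4 / β * ((k : ℝ) * ℓ / ((k : ℝ) + ℓ)) *
        ((k + ℓ - 2).choose ((k + ℓ - 2) / 2)) := by
  have hvR : (0:ℝ) < 2 / β := by positivity
  have hv : Real.toNNReal (2/β) ≠ 0 := by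
    simp only [ne_eq, Real.toNNReal_eq_zero, not_le]
    exact hvR
  rw [cov_linear_combo P (2/β) hvR.le ξ hmeas hindep hlaw hv]
  have hinter : Finset.Icc 1 ((k+2)/2) ∩ Finset.Icc 1 ((ℓ+2)/2)
      = Finset.Icc 1 ((k+2)/2 ⊓ (ℓ+2)/2) := by
    ext x
    simp only [Finset.mem_inter, Finset.mem_Icc, le_min_iff, min_le_iff]
    omega
  rw [hinter]
  -- convert to Nat sum
  obtain ⟨m, hm⟩ : ∃ m, k + ℓ = 2*m + 2 := ⟨(k+ℓ-2)/2, by omega⟩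
  have hm2 : k + ℓ - 2 = 2*m := by omega
  have hsum : ∑ h ∈ Finset.Icc 1 ((k+2)/2 ⊓ (ℓ+2)/2), (sigma k h : ℝ) * (sigma ℓ h : ℝ)
      = ((k * ℓ * Ncard (2*m) 1 : ℕ) : ℝ) := by
    rw [← hm2, ← sigma_sum k ℓ hk hℓ hpar]
    push_cast
    rfl
  rw [hsum]
  have hcenter := Ncard_center m
  have hchoose : ((k + ℓ - 2).choose ((k + ℓ - 2) / 2)) = (2*m).choose m := by
    rw [hm2]
    congr 1
    omega
  rw [hchoose]
  have hcenterR : ((m:ℝ) + 1) * (Ncard (2*m) 1 : ℝ) = ((2*m).choose m : ℝ) := by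
    exact_mod_cast hcenter
  have hklR : (k:ℝ) + (ℓ:ℝ) = 2*(m:ℝ) + 2 := by exact_mod_cast hm
  have hβ' : β ≠ 0 := ne_of_gt hβ
  have hm1 : (m:ℝ) + 1 ≠ 0 := by positivity
  push_cast
  rw [hklR, ← hcenterR]
  field_simp
  ring
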